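/- arXiv:1206.0189 — 3 statements merged into one kernel-verified Lean document; each statement's English description precedes it below -/
import Mathlib

section
/- Let V be a real inner product space, let ρ : ℝ → ℝ satisfy ρ(t) > 0 for all t ∈ [t₁, t₂], and suppose the function φ_ρ(t) = t·ρ(t)² is injective on [t₁, t₂]. Then the map A(v) = ρ(‖v‖²)·v is injective on the set { v ∈ V : t₁ ≤ ‖v‖² ≤ t₂ }: if ρ(‖v₁‖²)·v₁ = ρ(‖v₂‖²)·v₂ with ‖v₁‖², ‖v₂‖² ∈ [t₁, t₂], then v₁ = v₂. -/
/-- Injectivity consequence of Theorem 3.1: if `ρ > 0` on `[t₁, t₂]` and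
`φ_ρ(t) = t ρ(t)²` is injective on `[t₁, t₂]`, then
`A v = ρ(‖v‖²) • v` is injective on `{v : t₁ ≤ ‖v‖² ≤ t₂}`. -/
theorem stmt_3 {V : Type*} [NormedAddCommGroup V] [InnerProductSpace ℝ V]
    (t₁ t₂ : ℝ) (ρ : ℝ → ℝ)
    (hρ : ∀ t ∈ Set.Icc t₁ t₂, 0 < ρ t)
    (hφ : Set.InjOn (fun t => t * (ρ t) ^ 2) (Set.Icc t₁ t₂)) :
    ∀ v₁ v₂ : V, ‖v₁‖ ^ 2 ∈ Set.Icc t₁ t₂ → ‖v₂‖ ^ 2 ∈ Set.Icc t₁ t₂ →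
      ρ (‖v₁‖ ^ 2) • v₁ = ρ (‖v₂‖ ^ 2) • v₂ → v₁ = v₂ := by
  intro v₁ v₂ h₁ h₂ hA
  have hn : ‖ρ (‖v₁‖ ^ 2) • v₁‖ = ‖ρ (‖v₂‖ ^ 2) • v₂‖ := by rw [hA]
  rw [norm_smul, norm_smul] at hn
  have hr1 := hρ _ h₁
  have hr2 := hρ _ h₂
  have hsq : ‖v₁‖ ^ 2 * (ρ (‖v₁‖ ^ 2)) ^ 2 = ‖v₂‖ ^ 2 * (ρ (‖v₂‖ ^ 2)) ^ 2 := by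
    have := congrArg (fun x => x ^ 2) hn
    simp only [mul_pow, Real.norm_eq_abs, sq_abs] at this
    ring_nf
    ring_nf at this
    linarith
  have heq : ‖v₁‖ ^ 2 = ‖v₂‖ ^ 2 := hφ h₁ h₂ hsq
  rw [heq] at hA
  exact smul_right_injective V (ne_of_gt (hρ _ h₂)) hA
end

section
/- Let V be a real inner product space, let η̃ : ℝ → ℝ be a function, let I ⊆ [0, ∞) be a set on which the function f(t) = t·exp(−2·η̃(t)) is injective, and let ρ : ℝ → ℝ satisfy ρ(f(t)) = exp(η̃(t)) for every t ∈ I. If ω₁, ω₂ ∈ V are such that ‖ω₁‖² and ‖ω₂‖² both lie in the image f(I), and ρ(‖ω₁‖²)·ω₁ = ρ(‖ω₂‖²)·ω₂, then ω₁ = ω₂. -/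
/-- Uniqueness assertion in the proof of Proposition 2.2: if
`f t = t * exp(−2 ηt t)` is injective on `I ⊆ [0, ∞)` and
`ρ (f t) = exp (ηt t)` on `I`, then `A ω = ρ(‖ω‖²) • ω` is injective on
vectors whose squared norms lie in the image `f '' I`. -/
theorem stmt_4 {V : Type*} [NormedAddCommGroup V] [InnerProductSpace ℝ V]
    (ηt ρ : ℝ → ℝ) (I : Set ℝ) (hI : I ⊆ Set.Ici 0)
    (hf : Set.InjOn (fun t => t * Real.exp (-2 * ηt t)) I)
    (hρ : ∀ t ∈ I, ρ (t * Real.exp (-2 * ηt t)) = Real.exp (ηt t)) :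
    ∀ ω₁ ω₂ : V,
      ‖ω₁‖ ^ 2 ∈ (fun t => t * Real.exp (-2 * ηt t)) '' I →
      ‖ω₂‖ ^ 2 ∈ (fun t => t * Real.exp (-2 * ηt t)) '' I →
      ρ (‖ω₁‖ ^ 2) • ω₁ = ρ (‖ω₂‖ ^ 2) • ω₂ → ω₁ = ω₂ := by
  rintro ω₁ ω₂ ⟨t₁, ht₁, hω₁⟩ ⟨t₂, ht₂, hω₂⟩ h
  simp only at hω₁ hω₂
  have hρ₁ : ρ (‖ω₁‖ ^ 2) = Real.exp (ηt t₁) := by rw [← hω₁]; exact hρ t₁ ht₁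
  have hρ₂ : ρ (‖ω₂‖ ^ 2) = Real.exp (ηt t₂) := by rw [← hω₂]; exact hρ t₂ ht₂
  -- take norms
  have hn : Real.exp (ηt t₁) * ‖ω₁‖ = Real.exp (ηt t₂) * ‖ω₂‖ := by
    have := congrArg (norm : V → ℝ) h
    rwa [norm_smul, norm_smul, hρ₁, hρ₂, Real.norm_eq_abs, Real.norm_eq_abs,
      abs_of_pos (Real.exp_pos _), abs_of_pos (Real.exp_pos _)] at this
  have hsq : t₁ = t₂ := by
    have h1 : (Real.exp (ηt t₁) * ‖ω₁‖) ^ 2 = t₁ := by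
      rw [mul_pow, ← hω₁, ← Real.exp_nat_mul]
      rw [Real.exp_eq_exp.mpr (by ring : (2:ℕ) * ηt t₁ = -(-2 * ηt t₁))]
      rw [Real.exp_neg]
      field_simp
    have h2 : (Real.exp (ηt t₂) * ‖ω₂‖) ^ 2 = t₂ := by
      rw [mul_pow, ← hω₂, ← Real.exp_nat_mul]
      rw [Real.exp_eq_exp.mpr (by ring : (2:ℕ) * ηt t₂ = -(-2 * ηt t₂))]
      rw [Real.exp_neg]
      field_simp
    rw [← h1, ← h2, hn]
  have hnorm : ‖ω₁‖ ^ 2 = ‖ω₂‖ ^ 2 := by rw [← hω₁, ← hω₂, hsq]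
  have : ρ (‖ω₁‖ ^ 2) = ρ (‖ω₂‖ ^ 2) := by rw [hnorm]
  rw [this] at h
  have hne : ρ (‖ω₂‖ ^ 2) ≠ 0 := by rw [hρ₂]; exact (Real.exp_pos _).ne'
  exact smul_right_injective V hne h
end

section
/- Let I ⊆ [0, ∞), let η, ζ, ρ₁ : ℝ → ℝ be functions, suppose f_η(t) = t·exp(−2·η(t)) is injective on I with inverse g (g(f_η(t)) = t for t ∈ I and g maps f_η(I) into I), and define ρ₀(ŝ) = exp(η(g(ŝ)) − ζ(g(ŝ)))·ρ₁(g(ŝ)) and φ₁(t) = t·(ρ₁(t)·exp(−ζ(t)))². Let ŝ be an interior point of f_η(I) at which g is differentiable with derivative g′(ŝ), and suppose φ₁ is differentiable at g(ŝ) with derivative φ₁′(g(ŝ)). Then the function φ₀(s) = s·ρ₀(s)² is differentiable at ŝ with φ₀′(ŝ) = φ₁′(g(ŝ))·g′(ŝ). In particular, φ₀′(ŝ) > 0 if and only if φ₁′(g(ŝ)) and g′(ŝ) have the same sign (their product is positive). -/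
/-- Final displayed formula in the proof of Theorem 4.3: with
`f_η t = t exp(−2 η t)` injective on `I ⊆ [0, ∞)`, `g` its inverse
(mapping `f_η '' I` into `I`), `ρ₀ shat = exp(η(g shat) − ζ(g shat)) ρ₁(g shat)`,
and `φ₁ t = t (ρ₁ t exp(−ζ t))²`: if `shat` is interior to `f_η '' I`, `g` has
derivative `g'` at `shat` and `φ₁` has derivative `φ₁'` at `g shat`, then
`φ₀(s) = s ρ₀(s)²` has derivative `φ₁' * g'` at `shat`; in particular
`φ₀'(shat) > 0` iff `φ₁'(g shat)` and `g'(shat)` have the same sign. -/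
theorem stmt_15 (I : Set ℝ) (hI : I ⊆ Set.Ici 0) (η ζ ρ₁ g ρ₀ : ℝ → ℝ)
    (hf : Set.InjOn (fun t => t * Real.exp (-2 * η t)) I)
    (hg : ∀ t ∈ I, g (t * Real.exp (-2 * η t)) = t)
    (hgI : ∀ shat ∈ (fun t => t * Real.exp (-2 * η t)) '' I, g shat ∈ I)
    (hρ₀ : ∀ shat : ℝ, ρ₀ shat = Real.exp (η (g shat) - ζ (g shat)) * ρ₁ (g shat))
    (shat g' φ₁' : ℝ)
    (hshat : shat ∈ interior ((fun t => t * Real.exp (-2 * η t)) '' I))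
    (hg' : HasDerivAt g g' shat)
    (hφ₁' : HasDerivAt (fun t => t * (ρ₁ t * Real.exp (-ζ t)) ^ 2) φ₁' (g shat)) :
    HasDerivAt (fun s => s * (ρ₀ s) ^ 2) (φ₁' * g') shat ∧
    (0 < φ₁' * g' ↔ (0 < φ₁' ∧ 0 < g') ∨ (φ₁' < 0 ∧ g' < 0)) := by
  refine ⟨?_, mul_pos_iff⟩
  have hcomp : HasDerivAt ((fun t => t * (ρ₁ t * Real.exp (-ζ t)) ^ 2) ∘ g)
      (φ₁' * g') shat := hφ₁'.comp shat hg'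
  have heq : (fun s => s * (ρ₀ s) ^ 2) =ᶠ[nhds shat]
      ((fun t => t * (ρ₁ t * Real.exp (-ζ t)) ^ 2) ∘ g) := by
    filter_upwards [mem_interior_iff_mem_nhds.mp hshat] with s hs
    obtain ⟨t, htI, rfl⟩ := hs
    have hgt : g (t * Real.exp (-2 * η t)) = t := hg t htI
    simp only [Function.comp, hρ₀, hgt]
    have key : Real.exp (-2 * η t) * Real.exp (η t - ζ t) ^ 2 = Real.exp (-ζ t) ^ 2 := by
      rw [sq, sq, ← Real.exp_add, ← Real.exp_add, ← Real.exp_add]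
      ring_nf
    calc t * Real.exp (-2 * η t) * (Real.exp (η t - ζ t) * ρ₁ t) ^ 2
        = t * (Real.exp (-2 * η t) * Real.exp (η t - ζ t) ^ 2) * ρ₁ t ^ 2 := by ring
      _ = t * (ρ₁ t * Real.exp (-ζ t)) ^ 2 := by rw [key]; ring
  exact hcomp.congr_of_eventuallyEq heq
end
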